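/- The kernel of the action of SL(2,ℂ) on 2×2 Hermitian matrices given by H ↦ A* H A is {I, -I}. -/
import Mathlib

open Matrix

theorem stmt_4 (A : Matrix.SpecialLinearGroup (Fin 2) ℂ) :
    (∀ H : Matrix (Fin 2) (Fin 2) ℂ, H.IsHermitian →
      (A : Matrix (Fin 2) (Fin 2) ℂ)ᴴ * H * A = H) ↔ (A = 1 ∨ A = -1) := by
  constructor
  · intro h
    set M : Matrix (Fin 2) (Fin 2) ℂ := (A : Matrix (Fin 2) (Fin 2) ℂ) with hM
    have h1 : Mᴴ * M = 1 := by
      have := h 1 isHermitian_one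
      simpa using this
    have h2 : M * Mᴴ = 1 := mul_eq_one_comm.mp h1
    have comm : ∀ H : Matrix (Fin 2) (Fin 2) ℂ, H.IsHermitian → H * M = M * H := by
      intro H hH
      have := congrArg (M * ·) (h H hH)
      simp only [← Matrix.mul_assoc, h2, Matrix.one_mul] at this
      exact this
    have hE : (!![1,0;0,0] : Matrix (Fin 2) (Fin 2) ℂ).IsHermitian := by
      ext i j; fin_cases i <;> fin_cases j <;> simp [Matrix.conjTranspose_apply]
    have hS : (!![0,1;1,0] : Matrix (Fin 2) (Fin 2) ℂ).IsHermitian := by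
      ext i j; fin_cases i <;> fin_cases j <;> simp [Matrix.conjTranspose_apply]
    have cE := comm _ hE
    have cS := comm _ hS
    have hb : M 0 1 = 0 := by
      have := congrFun (congrFun cE 0) 1
      simpa [Matrix.mul_apply, Fin.sum_univ_two] using this
    have hc : M 1 0 = 0 := by
      have := congrFun (congrFun cE 1) 0
      simpa [Matrix.mul_apply, Fin.sum_univ_two] using this.symm
    have had : M 1 1 = M 0 0 := by
      have := congrFun (congrFun cS 0) 1
      simpa [Matrix.mul_apply, Fin.sum_univ_two, hb, hc] using this
    have hdet : M.det = 1 := A.2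
    rw [Matrix.det_fin_two, hb, hc, had] at hdet
    have : M 0 0 = 1 ∨ M 0 0 = -1 := by
      rcases mul_self_eq_one_iff.mp (by linear_combination hdet) with h' | h'
      · exact Or.inl h'
      · exact Or.inr h'
    rcases this with h' | h'
    · left
      ext i j
      rw [← hM]
      fin_cases i <;> fin_cases j <;>
        simp_all [Matrix.one_apply]
    · right
      ext i j
      rw [← hM]
      fin_cases i <;> fin_cases j <;>
        simp_all [Matrix.one_apply]
  · rintro (rfl | rfl) H hH
    · simp [hH.eq]
    · simp [Matrix.SpecialLinearGroup.coe_neg, hH.eq]
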